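/- arXiv:2406.05922 — 5 statements merged into one kernel-verified Lean document; each statement's English description precedes it below -/
import Mathlib

section
/- Let ℓ ≥ 0 and Q ≥ 0 be integers and let 0 ≤ r ≤ 1. Then for every ρ ∈ ℝ, the Q-th derivative with respect to ρ of the function ρ ↦ j_ℓ(rρ) satisfies |(d^Q/dρ^Q) j_ℓ(rρ)| ≤ 1/√(2ℓ+1). -/
/-!
Differentiating the Poisson integral `Q` times under the integral sign only multiplies the
integrand by `(i r cos θ)^Q`, of modulus at most `1` when `0 ≤ r ≤ 1`. Every derivative is
therefore bounded by `½ ∫₀^π |P_ℓ(cos θ)| sin θ dθ = ½ ∫₋₁¹ |P_ℓ|`, which Cauchy–Schwarz bounds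
by `½ √2 ‖P_ℓ‖₂`. Finally `‖P_ℓ‖₂² = 2/(2ℓ+1)`: after `ℓ` integrations by parts in Rodrigues'
formula it becomes `(2ℓ)! / (2^ℓ ℓ!)² · ∫₋₁¹ (1 - x²)^ℓ dx`, a Wallis integral.
-/

noncomputable section

open MeasureTheory Finset Real

/-- Legendre polynomial of degree `ℓ` (Rodrigues' formula). -/
def legendreP (ℓ : ℕ) : Polynomial ℝ :=
  Polynomial.C ((2 ^ ℓ * Nat.factorial ℓ : ℝ)⁻¹) *
    Polynomial.derivative^[ℓ] ((Polynomial.X ^ 2 - 1) ^ ℓ)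

/-- Spherical Bessel function of the first kind `j_ℓ`,
via the Poisson-type integral representation
`i^ℓ j_ℓ(z) = (1/2) ∫₀^π e^{iz cos θ} P_ℓ(cos θ) sin θ dθ`. -/
def sphBessel (ℓ : ℕ) (z : ℝ) : ℝ :=
  ((-Complex.I) ^ ℓ * (1 / 2) *
    ∫ θ in (0:ℝ)..Real.pi,
      Complex.exp (Complex.I * (z : ℂ) * (Real.cos θ : ℂ)) *
        (((legendreP ℓ).eval (Real.cos θ) * Real.sin θ : ℝ) : ℂ)).re

/-- Bessel function of the first kind of order `ℓ + 1/2`: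
`J_{ℓ+1/2}(r) = √(2r/π) j_ℓ(r)`. -/
def besselJhalf (ℓ : ℕ) (r : ℝ) : ℝ :=
  Real.sqrt (2 * r / Real.pi) * sphBessel ℓ r

/-- `lam` is the `k`-th positive root of `j_ℓ`. -/
def IsNthPosRoot (ℓ k : ℕ) (lam : ℝ) : Prop :=
  0 < lam ∧ sphBessel ℓ lam = 0 ∧
    {x | x ∈ Set.Ioo 0 lam ∧ sphBessel ℓ x = 0}.ncard = k - 1

/-- Normalization constant `c_{ℓk} = 2√λ/(√π |J'_{ℓ+1/2}(λ)|)`,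
written in terms of the root `lam = λ_{ℓk}`. -/
def normConst (ℓ : ℕ) (lam : ℝ) : ℝ :=
  2 * Real.sqrt lam / (Real.sqrt Real.pi * |deriv (besselJhalf ℓ) lam|)

/-- The point of `S² ⊆ ℝ³` with spherical angles `(θ, φ)`. -/
def sphPt (θ φ : ℝ) : EuclideanSpace ℝ (Fin 3) :=
  (EuclideanSpace.equiv (Fin 3) ℝ).symm
    ![Real.sin θ * Real.cos φ, Real.sin θ * Real.sin φ, Real.cos θ]

/-- Normalized spherical harmonic `Y_ℓ^m`, as a function of a unit vector `γ ∈ S²`: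
`Y_ℓ^m(γ) = √((ℓ-m)!(2ℓ+1)/(4π(ℓ+m)!)) e^{imφ} P_ℓ^m(cos θ)` where
`γ = (sin θ cos φ, sin θ sin φ, cos θ)` and `P_ℓ^m` is the associated Legendre
function of the first kind. -/
def sphY (ℓ : ℕ) (m : ℤ) (γ : EuclideanSpace ℝ (Fin 3)) : ℂ :=
  ((Real.sqrt (((((ℓ : ℤ) - m).toNat.factorial : ℝ) * (2 * ℓ + 1)) /
      (4 * Real.pi * (((ℓ : ℤ) + m).toNat.factorial : ℝ)))) : ℂ) *
  (if 0 ≤ m then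
      (-1 : ℂ) ^ m.toNat * ((γ 0 : ℂ) + Complex.I * (γ 1 : ℂ)) ^ m.toNat
    else
      ((((((ℓ : ℤ) + m).toNat.factorial : ℝ) / ((((ℓ : ℤ) - m).toNat.factorial : ℝ))) : ℝ) : ℂ) *
        ((γ 0 : ℂ) - Complex.I * (γ 1 : ℂ)) ^ (-m).toNat) *
  (((Polynomial.derivative^[m.natAbs] (legendreP ℓ)).eval (γ 2) : ℝ) : ℂ)

/-- The ball harmonic `ψ_{k,ℓ,m}(x) = c_{ℓk} j_ℓ(λ_{ℓk}‖x‖) Y_ℓ^m(x/‖x‖) χ_{[0,1)}(‖x‖)`,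
written in terms of the root `lam = λ_{ℓk}`. -/
def ballHarmonic (ℓ : ℕ) (m : ℤ) (lam : ℝ) (x : EuclideanSpace ℝ (Fin 3)) : ℂ :=
  ((normConst ℓ lam * sphBessel ℓ (lam * ‖x‖) : ℝ) : ℂ) *
    sphY ℓ m (‖x‖⁻¹ • x) * (if ‖x‖ < 1 then 1 else 0)

/-- Fourier transform of `f : ℝ³ → ℂ`, `f̂(ω) = ∫ f(x) e^{-i ω·x} dx`. -/
def ft3 (f : EuclideanSpace ℝ (Fin 3) → ℂ) (ω : EuclideanSpace ℝ (Fin 3)) : ℂ :=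
  ∫ x, f x * Complex.exp (-Complex.I * ((inner ℝ ω x : ℝ) : ℂ))

/-- Integral over `S²` with respect to the surface measure, in spherical coordinates. -/
def sphereIntegral (g : EuclideanSpace ℝ (Fin 3) → ℂ) : ℂ :=
  ∫ θ in (0:ℝ)..Real.pi, ∫ φ in (0:ℝ)..(2 * Real.pi),
    g (sphPt θ φ) * ((Real.sin θ : ℝ) : ℂ)

/-- `ε_u` in the Clenshaw–Curtis weights: `1/2` if `u ∈ {0, S}`, else `1`. -/
def quadEps (S u : ℕ) : ℝ := if u = 0 ∨ u = S then 1 / 2 else 1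

/-- Clenshaw–Curtis-type spherical quadrature weight `w_s` of order `S`. -/
def quadW (S s : ℕ) : ℝ :=
  4 * Real.pi * quadEps S s / (S : ℝ) ^ 2 *
    ∑ u ∈ Finset.range (S / 2 + 1),
      2 * quadEps S u / (1 - 4 * (u : ℝ) ^ 2) * Real.cos (2 * Real.pi * s * u / S)

/-- Spherical quadrature node `γ_{s,t}` of order `S`. -/
def quadNode (S s t : ℕ) : EuclideanSpace ℝ (Fin 3) :=
  sphPt (Real.pi * s / S) (2 * Real.pi * t / S)

/-- The `q`-th Chebyshev node of the first kind (out of `Q`) on `[a, b]`. -/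
def chebNode (a b : ℝ) (Q q : ℕ) : ℝ :=
  (b - a) / 2 * Real.cos ((2 * q + 1) / Q * (Real.pi / 2)) + (a + b) / 2

/-- Lagrange basis function `u_q` for the nodes `ρ 0, …, ρ (Q-1)`. -/
def lagrangeBasis (Q : ℕ) (ρ : ℕ → ℝ) (q : ℕ) (x : ℝ) : ℝ :=
  ∏ r ∈ (Finset.range Q).erase q, (x - ρ r) / (ρ q - ρ r)

/-- The Laplacian on `ℝ³`: sum of the three pure second partial derivatives. -/
def laplacian3 (f : EuclideanSpace ℝ (Fin 3) → ℂ) (x : EuclideanSpace ℝ (Fin 3)) : ℂ :=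
  ∑ i : Fin 3, iteratedDeriv 2 (fun t : ℝ => f (x + t • EuclideanSpace.single i (1:ℝ))) 0

namespace Polynomial

theorem eval_iterate_derivative_pow_eq_zero {R : Type*} [CommRing R] {p : R[X]} {x : R}
    (hx : p.IsRoot x) {m n : ℕ} (hmn : m < n) : (derivative^[m] (p ^ n)).eval x = 0 := by
  obtain ⟨q, hq⟩ := pow_sub_dvd_iterate_derivative_pow p n m
  rw [hq, eval_mul, eval_pow, hx.eq_zero, zero_pow (by omega), zero_mul]

theorem Monic.iterate_derivative_natDegree {R : Type*} [CommSemiring R] {p : R[X]}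
    (hp : p.Monic) : derivative^[p.natDegree] p = C (p.natDegree.factorial : R) := by
  have hdeg : (derivative^[p.natDegree] p).natDegree ≤ 0 :=
    (natDegree_iterate_derivative _ _).trans (by omega)
  rw [eq_C_of_natDegree_le_zero hdeg, coeff_iterate_derivative, zero_add,
    Nat.descFactorial_self, show p.coeff p.natDegree = 1 from hp, nsmul_one]

theorem integral_eval_mul_eval_iterate_derivative {a b : ℝ} (f g : ℝ[X]) (n : ℕ)
    (ha : ∀ k < n, (derivative^[k] g).eval a = 0) (hb : ∀ k < n, (derivative^[k] g).eval b = 0) :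
    ∫ x in a..b, f.eval x * (derivative^[n] g).eval x =
      (-1) ^ n * ∫ x in a..b, (derivative^[n] f).eval x * g.eval x := by
  induction n generalizing f with
  | zero => simp
  | succ n ih =>
    have hparts := intervalIntegral.integral_mul_deriv_eq_deriv_mul
      (fun x _ => f.hasDerivAt x) (fun x _ => (derivative^[n] g).hasDerivAt x)
      ((derivative f).continuous.intervalIntegrable a b)
      ((derivative (derivative^[n] g)).continuous.intervalIntegrable a b)
    rw [Function.iterate_succ_apply', hparts, ha n n.lt_succ_self, hb n n.lt_succ_self,
      ih (derivative f) (fun k hk => ha k (by omega)) (fun k hk => hb k (by omega)),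
      Function.iterate_succ_apply]
    ring

end Polynomial

open Polynomial in
theorem integral_eval_iterate_derivative_X_sq_sub_one_pow_sq (ℓ : ℕ) :
    ∫ x in (-1:ℝ)..1, ((derivative^[ℓ] ((X ^ 2 - 1 : ℝ[X]) ^ ℓ)).eval x) ^ 2 =
      (2 * ℓ).factorial * ∫ x in (-1:ℝ)..1, (1 - x ^ 2) ^ ℓ := by
  have hquad : (X ^ 2 - 1 : ℝ[X]) = X ^ 2 - C 1 := by rw [map_one]
  set p : ℝ[X] := (X ^ 2 - 1) ^ ℓ
  have hmonic : p.Monic := by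
    simpa only [p, hquad] using (monic_X_pow_sub_C (1 : ℝ) two_ne_zero).pow ℓ
  have hdeg : p.natDegree = 2 * ℓ := by
    rw [natDegree_pow, hquad, natDegree_X_pow_sub_C, mul_comm]
  have hroot : ∀ x : ℝ, x ^ 2 = 1 → ∀ k < ℓ, (derivative^[k] p).eval x = 0 := fun x hx k hk =>
    eval_iterate_derivative_pow_eq_zero (by simp [hx]) hk
  simp_rw [sq (eval _ _)]
  rw [integral_eval_mul_eval_iterate_derivative _ p ℓ (hroot (-1) (by norm_num))
    (hroot 1 (by norm_num)), ← Function.iterate_add_apply, ← two_mul, ← hdeg,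
    hmonic.iterate_derivative_natDegree, hdeg]
  simp only [p, eval_C, eval_pow, eval_sub, eval_X, eval_one,
    intervalIntegral.integral_const_mul]
  rw [mul_left_comm, ← intervalIntegral.integral_const_mul]
  congr 2 with x
  rw [← mul_pow]
  ring

theorem integral_sin_mul_comp_cos {g : ℝ → ℝ} (hg : Continuous g) :
    ∫ θ in (0:ℝ)..π, sin θ * g (cos θ) = ∫ x in (-1:ℝ)..1, g x := by
  have hsubst := intervalIntegral.integral_comp_mul_deriv (a := 0) (b := π) (g := g)
    (fun θ _ => hasDerivAt_cos θ) (by fun_prop) hg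
  rw [cos_zero, cos_pi] at hsubst
  rw [intervalIntegral.integral_symm 1 (-1), ← hsubst,
    ← intervalIntegral.integral_neg]
  congr with θ
  simp only [Function.comp_apply]
  ring

theorem two_mul_prod_range_wallis_eq (n : ℕ) :
    2 * ∏ i ∈ range n, (2 * (i : ℝ) + 2) / (2 * i + 3) =
      2 ^ (2 * n + 1) * (n.factorial : ℝ) ^ 2 / (2 * n + 1).factorial := by
  induction n with
  | zero => norm_num
  | succ n ih =>
    rw [prod_range_succ, ← mul_assoc, ih, show 2 * (n + 1) + 1 = 2 * n + 1 + 1 + 1 by ring,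
      Nat.factorial_succ (2 * n + 1 + 1), Nat.factorial_succ (2 * n + 1), Nat.factorial_succ n]
    push_cast
    field_simp
    ring

theorem integral_one_sub_sq_pow (n : ℕ) :
    ∫ x in (-1:ℝ)..1, (1 - x ^ 2) ^ n =
      2 ^ (2 * n + 1) * (n.factorial : ℝ) ^ 2 / (2 * n + 1).factorial := by
  rw [← integral_sin_mul_comp_cos (by fun_prop), ← two_mul_prod_range_wallis_eq,
    ← integral_sin_pow_odd]
  congr with θ
  rw [← sin_sq]
  ring

theorem integral_legendreP_sq (ℓ : ℕ) :
    ∫ x in (-1:ℝ)..1, (legendreP ℓ).eval x ^ 2 = 2 / (2 * ℓ + 1) := by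
  simp only [legendreP, Polynomial.eval_mul, Polynomial.eval_C, mul_pow,
    intervalIntegral.integral_const_mul, integral_eval_iterate_derivative_X_sq_sub_one_pow_sq,
    integral_one_sub_sq_pow]
  rw [Nat.factorial_succ (2 * ℓ)]
  push_cast
  field_simp
  ring

theorem sq_integral_abs_le_mul_integral_sq {f : ℝ → ℝ} {a b : ℝ} (hab : a ≤ b)
    (hf : Continuous f) :
    (∫ x in a..b, |f x|) ^ 2 ≤ (b - a) * ∫ x in a..b, f x ^ 2 := by
  rcases hab.eq_or_lt with rfl | hlt
  · simp
  obtain ⟨B, hB⟩ : ∃ B, ∫ x in a..b, |f x| = B := ⟨_, rfl⟩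
  rw [hB]
  have hexpand : ∫ x in a..b, ((b - a) * |f x| - B) ^ 2 =
      (b - a) * ((b - a) * (∫ x in a..b, f x ^ 2) - B ^ 2) := by
    have hpoint : ∀ x, ((b - a) * |f x| - B) ^ 2 =
        (b - a) ^ 2 * f x ^ 2 - 2 * (b - a) * B * |f x| + B ^ 2 := fun x => by
      rw [sub_sq, mul_pow, sq_abs]; ring
    simp only [hpoint]
    rw [intervalIntegral.integral_add, intervalIntegral.integral_sub,
      intervalIntegral.integral_const_mul, intervalIntegral.integral_const_mul,
      intervalIntegral.integral_const, smul_eq_mul, hB]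
    · ring
    all_goals exact (by fun_prop : Continuous _).intervalIntegrable a b
  have hnonneg : 0 ≤ ∫ x in a..b, ((b - a) * |f x| - B) ^ 2 :=
    intervalIntegral.integral_nonneg hab fun x _ => sq_nonneg _
  rw [hexpand] at hnonneg
  linarith [(mul_nonneg_iff_of_pos_left (sub_pos.2 hlt)).1 hnonneg]

theorem integral_abs_legendreP_le (ℓ : ℕ) :
    ∫ x in (-1:ℝ)..1, |(legendreP ℓ).eval x| ≤ 2 / √(2 * ℓ + 1) := by
  have hnonneg : 0 ≤ ∫ x in (-1:ℝ)..1, |(legendreP ℓ).eval x| :=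
    intervalIntegral.integral_nonneg (by norm_num) fun x _ => abs_nonneg _
  have hsq := sq_integral_abs_le_mul_integral_sq (a := -1) (b := 1) (by norm_num)
    (legendreP ℓ).continuous
  rw [integral_legendreP_sq] at hsq
  have hpos : (0 : ℝ) < 2 * ℓ + 1 := by positivity
  rw [le_div_iff₀ (Real.sqrt_pos.2 hpos),
    ← pow_le_pow_iff_left₀ (by positivity) zero_le_two two_ne_zero, mul_pow, Real.sq_sqrt hpos.le]
  calc _ ≤ (1 - -1) * (2 / (2 * ℓ + 1)) * (2 * ℓ + 1 : ℝ) := by gcongr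
    _ = 2 ^ 2 := by field_simp; norm_num

section OscillatoryIntegral

open Complex

variable {u : ℝ → ℝ} {w : ℝ → ℂ} {a b : ℝ}

theorem norm_I_mul_pow_mul_exp_mul (x t : ℝ) (n : ℕ) (z : ℂ) :
    ‖(I * x) ^ n * exp (I * t * x) * z‖ = |x| ^ n * ‖z‖ := by
  rw [norm_mul, norm_mul, norm_pow, norm_mul, norm_I, one_mul, norm_real, Real.norm_eq_abs,
    show I * t * x = ((t * x : ℝ) : ℂ) * I by push_cast; ring, norm_exp_ofReal_mul_I, mul_one]

theorem hasDerivAt_integral_I_mul_pow_mul_exp (hu : Continuous u) (hw : Continuous w) (n : ℕ)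
    (t : ℝ) :
    HasDerivAt (fun t : ℝ => ∫ θ in a..b, (I * u θ) ^ n * exp (I * t * u θ) * w θ)
      (∫ θ in a..b, (I * u θ) ^ (n + 1) * exp (I * t * u θ) * w θ) t := by
  have hderiv : ∀ θ s : ℝ, HasDerivAt (fun s : ℝ => (I * u θ) ^ n * exp (I * s * u θ) * w θ)
      ((I * u θ) ^ (n + 1) * exp (I * s * u θ) * w θ) s := fun θ s => by
    have hlin : HasDerivAt (fun s : ℝ => I * s * u θ) (I * u θ) s := by
      simpa using ((hasDerivAt_id (s : ℂ)).comp_ofReal.const_mul I).mul_const (u θ : ℂ)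
    exact ((hlin.cexp.const_mul ((I * u θ) ^ n)).mul_const (w θ)).congr_deriv (by ring)
  exact (intervalIntegral.hasDerivAt_integral_of_dominated_loc_of_deriv_le
    (bound := fun θ => |u θ| ^ (n + 1) * ‖w θ‖) Filter.univ_mem
    (Filter.Eventually.of_forall fun s => (by fun_prop : Continuous _).aestronglyMeasurable)
    ((by fun_prop : Continuous _).intervalIntegrable a b)
    ((by fun_prop : Continuous _).aestronglyMeasurable)
    (Filter.Eventually.of_forall fun θ _ s _ => (norm_I_mul_pow_mul_exp_mul _ _ _ _).le)
    ((by fun_prop : Continuous _).intervalIntegrable a b)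
    (Filter.Eventually.of_forall fun θ _ s _ => hderiv θ s)).2

theorem iteratedDeriv_re_integral_exp_mul (hu : Continuous u) (hw : Continuous w) (n : ℕ) :
    iteratedDeriv n (fun t : ℝ => (∫ θ in a..b, exp (I * t * u θ) * w θ).re) =
      fun t : ℝ => (∫ θ in a..b, (I * u θ) ^ n * exp (I * t * u θ) * w θ).re := by
  induction n with
  | zero => simp
  | succ n ih =>
    rw [iteratedDeriv_succ, ih]
    funext t
    exact (reCLM.hasFDerivAt.comp_hasDerivAt t
      (hasDerivAt_integral_I_mul_pow_mul_exp hu hw n t)).deriv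

theorem norm_integral_I_mul_pow_mul_exp_le (hab : a ≤ b) (hu : Continuous u)
    (hu_le : ∀ θ ∈ Set.Icc a b, |u θ| ≤ 1) (hw : Continuous w) (n : ℕ) (t : ℝ) :
    ‖∫ θ in a..b, (I * u θ) ^ n * exp (I * t * u θ) * w θ‖ ≤ ∫ θ in a..b, ‖w θ‖ := by
  refine (intervalIntegral.norm_integral_le_integral_norm hab).trans
    (intervalIntegral.integral_mono_on hab ((by fun_prop : Continuous _).intervalIntegrable a b)
      ((by fun_prop : Continuous _).intervalIntegrable a b) fun θ hθ => ?_)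
  rw [norm_I_mul_pow_mul_exp_mul]
  exact mul_le_of_le_one_left (norm_nonneg _) (pow_le_one₀ (abs_nonneg _) (hu_le θ hθ))

end OscillatoryIntegral

def poissonWeight (ℓ : ℕ) (θ : ℝ) : ℂ :=
  (-Complex.I) ^ ℓ * (1 / 2) * (((legendreP ℓ).eval (cos θ) * sin θ : ℝ) : ℂ)

theorem continuous_poissonWeight (ℓ : ℕ) : Continuous (poissonWeight ℓ) := by
  unfold poissonWeight
  fun_prop

theorem sphBessel_mul_eq_re_integral (ℓ : ℕ) (r t : ℝ) :
    sphBessel ℓ (r * t) = (∫ θ in (0:ℝ)..π,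
      Complex.exp (Complex.I * t * (r * cos θ : ℝ)) * poissonWeight ℓ θ).re := by
  simp only [sphBessel, poissonWeight, ← intervalIntegral.integral_const_mul]
  congr 2 with θ
  rw [mul_left_comm]
  congr 2
  push_cast
  ring

theorem integral_norm_poissonWeight (ℓ : ℕ) :
    ∫ θ in (0:ℝ)..π, ‖poissonWeight ℓ θ‖ = 1 / 2 * ∫ x in (-1:ℝ)..1, |(legendreP ℓ).eval x| := by
  rw [← integral_sin_mul_comp_cos (by fun_prop), ← intervalIntegral.integral_const_mul]
  refine intervalIntegral.integral_congr fun θ hθ => ?_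
  rw [Set.uIcc_of_le pi_pos.le] at hθ
  rw [poissonWeight, norm_mul, norm_mul, norm_pow, norm_neg, Complex.norm_I, one_pow, one_mul,
    Complex.norm_real, Real.norm_eq_abs, abs_mul,
    abs_of_nonneg (sin_nonneg_of_nonneg_of_le_pi hθ.1 hθ.2)]
  norm_num
  exact mul_comm _ _

/-- For `0 ≤ r ≤ 1`, the `Q`-th derivative of `ρ ↦ j_ℓ(rρ)` is bounded
by `1/√(2ℓ+1)`. -/
theorem deriv_sphBessel_bound (ℓ Q : ℕ) (r : ℝ) (hr0 : 0 ≤ r) (hr1 : r ≤ 1) (ρ : ℝ) :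
    |iteratedDeriv Q (fun t : ℝ => sphBessel ℓ (r * t)) ρ| ≤ 1 / Real.sqrt (2 * ℓ + 1) := by
  have hu : Continuous fun θ => r * cos θ := by fun_prop
  have hu_le : ∀ θ, |r * cos θ| ≤ 1 := fun θ => by
    rw [abs_mul, abs_of_nonneg hr0]
    exact mul_le_one₀ hr1 (abs_nonneg _) (abs_cos_le_one θ)
  simp only [sphBessel_mul_eq_re_integral]
  rw [iteratedDeriv_re_integral_exp_mul hu (continuous_poissonWeight ℓ)]
  calc _ ≤ _ := Complex.abs_re_le_norm _
    _ ≤ ∫ θ in (0:ℝ)..π, ‖poissonWeight ℓ θ‖ :=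
      norm_integral_I_mul_pow_mul_exp_le pi_pos.le hu (fun θ _ => hu_le θ)
        (continuous_poissonWeight ℓ) Q ρ
    _ ≤ 1 / 2 * (2 / √(2 * ℓ + 1)) := by
      rw [integral_norm_poissonWeight]
      gcongr
      exact integral_abs_legendreP_le ℓ
    _ = 1 / √(2 * ℓ + 1) := by ring

end
end

section
/- Let z ≥ 0 be real and let S ≥ 18 be an integer with S ≥ 2ez, and let ℓ be an integer with 0 ≤ ℓ ≤ S. Then (28/27) · √(2ℓ+1) · Σ_{ℓ' = ⌊S/2⌋+1}^{∞} (2ℓ'+1)^{3/2} · ( e z / (2ℓ'+3) )^{ℓ'} ≤ 27.6 · 2^{−S/4}. -/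
/-!
Since `e z ≤ S / 2` and every index `ℓ'` of the tail has `2ℓ' + 3 ≥ S + 4`, each base
`e z / (2ℓ' + 3)` is at most `ρ = S / (2(S + 4)) ≤ 1/2`, while `(2ℓ' + 1)^{3/2}` grows by at most a
factor `√2` per step. The tail is therefore dominated by a geometric series of ratio `√2/2`, which
gives `(2 + √2) (S + 3)^{3/2} ρ^{⌊S/2⌋+1}`. Finally `ρ^{⌊S/2⌋+1} ≤ 2^{-S/2} e^{-8/5} ≤ 2^{-S/2}/4`
by `1 - x ≤ e^{-x}`, and for `S ≥ 18` the polynomial factor `(S + 3)²` is at most `20 · 2^{S/4}`.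
-/

noncomputable section

open MeasureTheory Finset Real

lemma pow_three_add_two_mul_le {x : ℝ} (hx : 8 ≤ x) (j : ℕ) :
    (x + 2 * j) ^ 3 ≤ x ^ 3 * 2 ^ j := by
  induction j with
  | zero => simp
  | succ n ih =>
    set y := x + 2 * n
    have hy : 8 ≤ y := by have := n.cast_nonneg (α := ℝ); linarith
    calc (x + 2 * ((n + 1 : ℕ) : ℝ)) ^ 3 = (y + 2) ^ 3 := by push_cast; ring
      _ ≤ 2 * y ^ 3 := by nlinarith [mul_nonneg (sub_nonneg.2 hy) (sq_nonneg y)]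
      _ ≤ x ^ 3 * 2 ^ (n + 1) := by
        rw [pow_succ 2 n]
        nlinarith [pow_pos (two_pos (α := ℝ)) n]

lemma rpow_three_halves_add_two_mul_le {x : ℝ} (hx : 8 ≤ x) (j : ℕ) :
    (x + 2 * j) ^ ((3 : ℝ) / 2) ≤ x ^ ((3 : ℝ) / 2) * √2 ^ j := by
  have hxj : 0 ≤ x + 2 * j := by positivity
  rw [rpow_div_two_eq_sqrt _ hxj, rpow_div_two_eq_sqrt _ (by linarith)]
  simp only [rpow_ofNat]
  rw [← pow_le_pow_iff_left₀ (by positivity) (by positivity) two_ne_zero, mul_pow,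
    ← pow_mul, ← pow_mul, ← pow_mul, mul_comm 3, mul_comm j, pow_mul, pow_mul, pow_mul,
    sq_sqrt hxj, sq_sqrt (by linarith), sq_sqrt zero_le_two]
  exact pow_three_add_two_mul_le hx j

lemma div_add_pow_le_exp {a b : ℝ} (ha : 0 ≤ a) (hb : 0 < b) (n : ℕ) :
    (a / (a + b)) ^ n ≤ exp (-(n * b / (a + b))) := by
  have hab : a / (a + b) = 1 - b / (a + b) := by field_simp; ring
  calc (a / (a + b)) ^ n ≤ exp (-(b / (a + b))) ^ n := by
        gcongr
        rw [hab]
        exact one_sub_le_exp_neg _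
    _ = exp (-(n * b / (a + b))) := by rw [← exp_nat_mul]; ring_nf

lemma exp_neg_eight_fifths_le : exp (-(8 / 5)) ≤ 1 / 4 := by
  have h : (6 / 5 : ℝ) ^ 8 ≤ exp (8 / 5) := by
    calc (6 / 5 : ℝ) ^ 8 ≤ exp (1 / 5) ^ 8 := by
          gcongr
          linarith [add_one_le_exp (1 / 5)]
      _ = exp (8 / 5) := by rw [← exp_nat_mul]; norm_num
  rw [exp_neg, one_div]
  exact inv_anti₀ (by norm_num) (le_trans (by norm_num) h)

lemma div_two_mul_add_four_pow_le {S : ℕ} (hS : 11 ≤ S) :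
    ((S : ℝ) / (2 * (S + 4))) ^ (S / 2 + 1) ≤ 2 ^ (-(S : ℝ) / 2) / 4 := by
  have hsplit : (S : ℝ) / (2 * (S + 4)) = 2⁻¹ * (S / (S + 4)) := by field_simp
  have hS2 : (S : ℝ) ≤ 2 * ((S / 2 : ℕ) : ℝ) + 1 := by
    exact_mod_cast (by omega : S ≤ 2 * (S / 2) + 1)
  have hhalf : (2⁻¹ : ℝ) ^ (S / 2 + 1) ≤ 2 ^ (-(S : ℝ) / 2) := by
    rw [inv_pow, ← rpow_natCast, ← rpow_neg zero_le_two]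
    apply rpow_le_rpow_of_exponent_le one_le_two
    push_cast
    linarith
  have hdecay : ((S : ℝ) / (S + 4)) ^ (S / 2 + 1) ≤ 1 / 4 := by
    refine (div_add_pow_le_exp (Nat.cast_nonneg S) four_pos _).trans
      (le_trans (exp_le_exp.2 ?_) exp_neg_eight_fifths_le)
    have h11 : (11 : ℝ) ≤ S := by exact_mod_cast hS
    rw [neg_le_neg_iff, le_div_iff₀ (by positivity)]
    push_cast
    linarith
  rw [hsplit, mul_pow, div_eq_mul_one_div _ (4 : ℝ)]
  exact mul_le_mul hhalf hdecay (by positivity) (by positivity)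

lemma pow_eight_add_three_le {S : ℕ} (hS : 18 ≤ S) :
    ((S : ℝ) + 3) ^ 8 ≤ 20 ^ 4 * 2 ^ S := by
  induction S, hS using Nat.le_induction with
  | base => norm_num
  | succ n hn ih =>
    have hn' : (18 : ℝ) ≤ n := by exact_mod_cast hn
    calc ((n + 1 : ℕ) + 3 : ℝ) ^ 8 ≤ ((22 / 21) * (n + 3)) ^ 8 := by
          push_cast
          gcongr
          linarith
      _ = (22 / 21) ^ 8 * ((n : ℝ) + 3) ^ 8 := mul_pow _ _ _
      _ ≤ 2 * ((n : ℝ) + 3) ^ 8 := by gcongr; norm_num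
      _ ≤ 20 ^ 4 * 2 ^ (n + 1) := by rw [pow_succ 2 n]; linarith

lemma sq_add_three_le_two_rpow {S : ℕ} (hS : 18 ≤ S) :
    ((S : ℝ) + 3) ^ 2 ≤ 20 * 2 ^ ((S : ℝ) / 4) := by
  rw [← pow_le_pow_iff_left₀ (by positivity) (by positivity) four_ne_zero, ← pow_mul, mul_pow,
    ← rpow_natCast (2 ^ _), ← rpow_mul zero_le_two]
  norm_num
  linarith [pow_eight_add_three_le hS]

/-- Summand of the tail series, with `c = e z`. -/
def tailTerm (c : ℝ) (n : ℕ) : ℝ :=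
  (2 * (n : ℝ) + 1) ^ ((3 : ℝ) / 2) * (c / (2 * n + 3)) ^ n

lemma tailTerm_nonneg {c : ℝ} (hc : 0 ≤ c) (n : ℕ) : 0 ≤ tailTerm c n := by
  unfold tailTerm
  positivity

lemma tailTerm_le {c ρ : ℝ} {M : ℕ} (hc : 0 ≤ c) (hM : 3 ≤ M)
    (hcρ : c ≤ ρ * (2 * M + 5)) (j : ℕ) :
    tailTerm c (M + 1 + j) ≤ (2 * M + 3) ^ ((3 : ℝ) / 2) * ρ ^ (M + 1) * (√2 * ρ) ^ j := by
  have hM' : (3 : ℝ) ≤ M := by exact_mod_cast hM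
  have hbase : c / (2 * ((M + 1 + j : ℕ) : ℝ) + 3) ≤ ρ := by
    rw [div_le_iff₀ (by positivity)]
    push_cast
    nlinarith [j.cast_nonneg (α := ℝ)]
  have hpoly := rpow_three_halves_add_two_mul_le (x := 2 * M + 3) (by linarith) j
  unfold tailTerm
  calc _ = ((2 * M + 3) + 2 * j) ^ ((3 : ℝ) / 2) *
          (c / (2 * ((M + 1 + j : ℕ) : ℝ) + 3)) ^ (M + 1 + j) := by push_cast; ring_nf
    _ ≤ ((2 * M + 3) ^ ((3 : ℝ) / 2) * √2 ^ j) * ρ ^ (M + 1 + j) := by gcongr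
    _ = _ := by ring

lemma tsum_tailTerm_le {c ρ : ℝ} {M : ℕ} (hc : 0 ≤ c) (hM : 3 ≤ M) (hρ : ρ ≤ 1 / 2)
    (hcρ : c ≤ ρ * (2 * M + 5)) :
    ∑' j, tailTerm c (M + 1 + j) ≤
      (2 + √2) * (2 * M + 3) ^ ((3 : ℝ) / 2) * ρ ^ (M + 1) := by
  set K := (2 * (M : ℝ) + 3) ^ ((3 : ℝ) / 2) * ρ ^ (M + 1)
  have hρ0 : 0 ≤ ρ := nonneg_of_mul_nonneg_left (hc.trans hcρ) (by positivity)
  have hr0 : 0 ≤ √2 / 2 := by positivity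
  have hr1 : √2 / 2 < 1 := by linarith [sqrt_two_lt_three_halves]
  have hr : √2 * ρ ≤ √2 / 2 := by nlinarith [sqrt_nonneg 2]
  have hle : ∀ j, tailTerm c (M + 1 + j) ≤ K * (√2 / 2) ^ j := fun j =>
    (tailTerm_le hc hM hcρ j).trans (by gcongr)
  have hgeom : Summable fun j : ℕ => K * (√2 / 2) ^ j :=
    (summable_geometric_of_lt_one hr0 hr1).mul_left K
  calc ∑' j, tailTerm c (M + 1 + j) ≤ ∑' j : ℕ, K * (√2 / 2) ^ j :=
        (hgeom.of_nonneg_of_le (fun j => tailTerm_nonneg hc _) hle).tsum_le_tsum hle hgeom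
    _ = K * (1 - √2 / 2)⁻¹ := by rw [tsum_mul_left, tsum_geometric_of_lt_one hr0 hr1]
    _ = (2 + √2) * K := by
        have : (1 - √2 / 2)⁻¹ = 2 + √2 := by
          rw [inv_eq_iff_eq_inv, eq_comm, inv_eq_of_mul_eq_one_left]
          nlinarith [sq_sqrt (zero_le_two (α := ℝ))]
        rw [this, mul_comm]
    _ = _ := by ring

lemma tsum_tailTerm_le_two_rpow {c : ℝ} {S : ℕ} (hc : 0 ≤ c) (hS : 11 ≤ S)
    (hcS : 2 * c ≤ S) :
    ∑' j, tailTerm c (S / 2 + 1 + j) ≤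
      (2 + √2) * ((S : ℝ) + 3) ^ ((3 : ℝ) / 2) * (2 ^ (-(S : ℝ) / 2) / 4) := by
  have hS2 : (S : ℝ) ≤ 2 * ((S / 2 : ℕ) : ℝ) + 1 := by
    exact_mod_cast (by omega : S ≤ 2 * (S / 2) + 1)
  have h2S : 2 * ((S / 2 : ℕ) : ℝ) ≤ S := by exact_mod_cast (by omega : 2 * (S / 2) ≤ S)
  have hρ : (S : ℝ) / (2 * (S + 4)) ≤ 1 / 2 := by
    rw [div_le_iff₀ (by positivity)]
    linarith
  have hcρ : c ≤ S / (2 * (S + 4)) * (2 * ((S / 2 : ℕ) : ℝ) + 5) := by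
    rw [div_mul_eq_mul_div, le_div_iff₀ (by positivity)]
    nlinarith
  refine (tsum_tailTerm_le hc (by omega) hρ hcρ).trans ?_
  gcongr
  exact div_two_mul_add_four_pow_le hS

/-- Tail bound: for `z ≥ 0`, `S ≥ 18` with `S ≥ 2ez`, and `0 ≤ ℓ ≤ S`,
`(28/27)√(2ℓ+1) Σ_{ℓ' > ⌊S/2⌋} (2ℓ'+1)^{3/2} (ez/(2ℓ'+3))^{ℓ'} ≤ 27.6 · 2^{-S/4}`. -/
theorem tail_sum_bound (z : ℝ) (hz : 0 ≤ z) (S : ℕ) (hS : 18 ≤ S)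
    (hSz : 2 * Real.exp 1 * z ≤ (S : ℝ)) (ℓ : ℕ) (hℓ : ℓ ≤ S) :
    28 / 27 * Real.sqrt (2 * ℓ + 1) *
      (∑' j : ℕ, (2 * ((S / 2 + 1 + j : ℕ) : ℝ) + 1) ^ ((3:ℝ)/2) *
        (Real.exp 1 * z / (2 * ((S / 2 + 1 + j : ℕ) : ℝ) + 3)) ^ (S / 2 + 1 + j)) ≤
    27.6 * (2:ℝ) ^ (-(S : ℝ) / 4) := by
  change 28 / 27 * √(2 * ℓ + 1) * ∑' j, tailTerm (exp 1 * z) (S / 2 + 1 + j) ≤ _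
  set P : ℝ := S + 3
  have hℓP : √(2 * ℓ + 1) ≤ √2 * √P := by
    rw [← sqrt_mul zero_le_two]
    have : (ℓ : ℝ) ≤ S := by exact_mod_cast hℓ
    exact sqrt_le_sqrt (by linarith)
  have hsqrtP : √P * P ^ ((3 : ℝ) / 2) = P ^ 2 := by
    rw [rpow_div_two_eq_sqrt _ (by positivity), rpow_ofNat, ← pow_succ',
      show 3 + 1 = 2 * 2 by norm_num, pow_mul, sq_sqrt (by positivity)]
  calc 28 / 27 * √(2 * ℓ + 1) * ∑' j, tailTerm (exp 1 * z) (S / 2 + 1 + j)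
      ≤ 28 / 27 * (√2 * √P) *
          ((2 + √2) * P ^ ((3 : ℝ) / 2) * (2 ^ (-(S : ℝ) / 2) / 4)) :=
        mul_le_mul (by gcongr) (tsum_tailTerm_le_two_rpow (by positivity) (by omega)
          (by rwa [← mul_assoc]))
          (tsum_nonneg fun j => tailTerm_nonneg (by positivity) _) (by positivity)
    _ = 7 / 27 * (2 * √2 + √2 ^ 2) * P ^ 2 * 2 ^ (-(S : ℝ) / 2) := by
        rw [← hsqrtP]; ring
    _ ≤ 7 / 27 * (2 * √2 + √2 ^ 2) * (20 * 2 ^ ((S : ℝ) / 4)) * 2 ^ (-(S : ℝ) / 2) := by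
        gcongr
        exact sq_add_three_le_two_rpow hS
    _ ≤ 27.6 * (2 ^ ((S : ℝ) / 4) * 2 ^ (-(S : ℝ) / 2)) := by
        rw [sq_sqrt zero_le_two]
        have := sqrt_two_lt_three_halves
        have : (0 : ℝ) < 2 ^ ((S : ℝ) / 4) * 2 ^ (-(S : ℝ) / 2) := by positivity
        nlinarith
    _ = 27.6 * 2 ^ (-(S : ℝ) / 4) := by
        rw [← rpow_add two_pos]
        ring_nf

end
end

section
/- Let S ≥ 1 be an integer and let w_s, s = 0,…,S, be the spherical quadrature weights of order S. Then 0 ≤ w_s ≤ 8π/S² for every s ∈ {0,…,S}. -/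
noncomputable section

open MeasureTheory Finset Real

/-! Since `|ε_u cos(⋯)| ≤ 1`, the `u`-th term of the sum defining `w_s` is at most
`2 / (4u² - 1) = 1/(2u - 1) - 1/(2u + 1)` in absolute value for `u ≥ 1`; these bounds telescope,
so the terms with `u ≥ 1` add up to at most `1` in absolute value, while the `u = 0` term is `1`.
Hence the sum lies in `[0, 2]`, and `0 < ε_s ≤ 1` gives `0 ≤ w_s ≤ 8π/S²`. -/

lemma quadEps_pos (S u : ℕ) : 0 < quadEps S u := by
  unfold quadEps; split_ifs <;> norm_num

lemma quadEps_le_one (S u : ℕ) : quadEps S u ≤ 1 := by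
  unfold quadEps; split_ifs <;> norm_num

lemma abs_two_mul_div_one_sub_four_mul_sq_le {a : ℝ} (ha : |a| ≤ 1) (u : ℕ) :
    |2 * a / (1 - 4 * ((u + 1 : ℕ) : ℝ) ^ 2)|
      ≤ 1 / (2 * (u : ℝ) + 1) - 1 / (2 * ((u + 1 : ℕ) : ℝ) + 1) := by
  have hden : 0 < 4 * ((u : ℝ) + 1) ^ 2 - 1 := by nlinarith [(u.cast_nonneg : (0 : ℝ) ≤ u)]
  have htelescope : 1 / (2 * (u : ℝ) + 1) - 1 / (2 * ((u : ℝ) + 1) + 1)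
      = 2 / (4 * ((u : ℝ) + 1) ^ 2 - 1) := by
    rw [div_sub_div _ _ (by positivity) (by positivity), div_eq_div_iff (by positivity) hden.ne']
    ring
  push_cast
  rw [htelescope, abs_div, abs_mul, abs_two,
    abs_of_neg (show 1 - 4 * ((u : ℝ) + 1) ^ 2 < 0 by linarith), neg_sub]
  gcongr
  linarith

lemma abs_sum_range_two_mul_div_one_sub_four_mul_sq_le {a : ℕ → ℝ} (ha : ∀ u, |a u| ≤ 1)
    (M : ℕ) : |∑ u ∈ range M, 2 * a (u + 1) / (1 - 4 * ((u + 1 : ℕ) : ℝ) ^ 2)| ≤ 1 :=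
  calc |∑ u ∈ range M, 2 * a (u + 1) / (1 - 4 * ((u + 1 : ℕ) : ℝ) ^ 2)|
      ≤ ∑ u ∈ range M, |2 * a (u + 1) / (1 - 4 * ((u + 1 : ℕ) : ℝ) ^ 2)| :=
        abs_sum_le_sum_abs _ _
    _ ≤ ∑ u ∈ range M, (1 / (2 * (u : ℝ) + 1) - 1 / (2 * ((u + 1 : ℕ) : ℝ) + 1)) :=
        sum_le_sum fun u _ => abs_two_mul_div_one_sub_four_mul_sq_le (ha _) u
    _ = 1 - 1 / (2 * (M : ℝ) + 1) := by
        rw [sum_range_sub' (fun u : ℕ => 1 / (2 * (u : ℝ) + 1))]; norm_num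
    _ ≤ 1 := sub_le_self _ (by positivity)

lemma sum_range_two_mul_div_one_sub_four_mul_sq_mem_Icc {a : ℕ → ℝ} (ha₀ : a 0 = 1 / 2)
    (ha : ∀ u, |a u| ≤ 1) (M : ℕ) :
    ∑ u ∈ range (M + 1), 2 * a u / (1 - 4 * (u : ℝ) ^ 2) ∈ Set.Icc 0 2 := by
  have hzero : 2 * a 0 / (1 - 4 * ((0 : ℕ) : ℝ) ^ 2) = 1 := by norm_num [ha₀]
  have := abs_le.mp (abs_sum_range_two_mul_div_one_sub_four_mul_sq_le ha M)
  rw [sum_range_succ', hzero]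
  constructor <;> linarith

theorem quadW_bounds_general (S : ℕ) :
    ∀ s ≤ S, 0 ≤ quadW S s ∧ quadW S s ≤ 8 * Real.pi / (S : ℝ) ^ 2 := by
  intro s _
  set a : ℕ → ℝ := fun u => quadEps S u * Real.cos (2 * Real.pi * s * u / S)
  have ha : ∀ u, |a u| ≤ 1 := fun u => by
    rw [abs_mul, abs_of_pos (quadEps_pos S u)]
    exact mul_le_one₀ (quadEps_le_one S u) (abs_nonneg _) (abs_cos_le_one _)
  have ha₀ : a 0 = 1 / 2 := by simp [a, quadEps]
  obtain ⟨hT₀, hT₂⟩ := sum_range_two_mul_div_one_sub_four_mul_sq_mem_Icc ha₀ ha (S / 2)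
  have hw : quadW S s = 4 * Real.pi / (S : ℝ) ^ 2 * (quadEps S s *
      ∑ u ∈ range (S / 2 + 1), 2 * a u / (1 - 4 * (u : ℝ) ^ 2)) := by
    rw [quadW, mul_div_right_comm, mul_assoc]
    congr 2
    exact sum_congr rfl fun u _ => by ring
  have hε₀ := quadEps_pos S s
  have hε₁ := quadEps_le_one S s
  rw [hw]
  constructor
  · positivity
  · calc _ ≤ 4 * Real.pi / (S : ℝ) ^ 2 * 2 := by gcongr; nlinarith
      _ = 8 * Real.pi / (S : ℝ) ^ 2 := by ring

/-- The spherical quadrature weights satisfy `0 ≤ w_s ≤ 8π/S²`. -/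
theorem quadW_bounds (S : ℕ) (hS : 1 ≤ S) :
    ∀ s ≤ S, 0 ≤ quadW S s ∧ quadW S s ≤ 8 * Real.pi / (S : ℝ) ^ 2 :=
  quadW_bounds_general S

end
end

section
/- Let S ≥ 1 be an integer and let w_s, s = 0,…,S, be the spherical quadrature weights of order S. Then Σ_{s=0}^{S} Σ_{t=0}^{S−1} w_s = 4π, i.e. S · Σ_{s=0}^{S} w_s = 4π. -/
noncomputable section

open MeasureTheory Finset Real

/-! The cosine sum over the `S` full periods is `S` at frequency `0` and vanishes at every other
frequency `u < S` (a geometric sum of `S`-th roots of unity). Since the weights `ε_s` make the sum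
over `s ≤ S` a trapezoidal rule for an `S`-periodic function, exchanging the `s`- and `u`-sums
leaves only the `u = 0` term `4π/S² · 1 · S`. -/

theorem sum_range_cos_two_pi_mul_div_eq_zero {S u : ℕ} (hu : ¬ S ∣ u) :
    ∑ s ∈ range S, cos (2 * π * s * u / S) = 0 := by
  rcases eq_or_ne S 0 with rfl | hS
  · simp
  set ζ := Complex.exp (2 * π * Complex.I / S)
  have hζ : IsPrimitiveRoot ζ S := Complex.isPrimitiveRoot_exp S hS
  have hζu : ζ ^ u ≠ 1 := by rwa [Ne, hζ.pow_eq_one_iff_dvd]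
  have hgeom : ∑ s ∈ range S, (ζ ^ u) ^ s = 0 := by
    rw [geom_sum_eq hζu, ← pow_mul, mul_comm, pow_mul, hζ.pow_eq_one, one_pow, sub_self,
      zero_div]
  have hcos (s : ℕ) : cos (2 * π * s * u / S) = ((ζ ^ u) ^ s).re := by
    rw [← pow_mul, ← Complex.exp_nat_mul, ← Complex.exp_ofReal_mul_I_re]
    push_cast
    ring_nf
  simp_rw [hcos, ← Complex.re_sum, hgeom, Complex.zero_re]

theorem sum_range_succ_quadEps_mul {S : ℕ} (hS : 1 ≤ S) (f : ℕ → ℝ) (hf : f S = f 0) :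
    ∑ s ∈ range (S + 1), quadEps S s * f s = ∑ s ∈ range S, f s := by
  obtain ⟨n, rfl⟩ : ∃ n, S = n + 1 := ⟨S - 1, by omega⟩
  have hinterior : ∀ i ∈ range n, quadEps (n + 1) (i + 1) * f (i + 1) = f (i + 1) := by
    intro i hi
    have : i < n := mem_range.mp hi
    rw [quadEps, if_neg (by omega), one_mul]
  rw [sum_range_succ, sum_range_succ', sum_congr rfl hinterior, sum_range_succ' _ n, hf]
  simp only [quadEps, true_or, or_true, if_true]
  ring

theorem sum_quadEps_mul_cos {S u : ℕ} (hS : 1 ≤ S) (hu : u < S) :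
    ∑ s ∈ range (S + 1), quadEps S s * cos (2 * π * s * u / S) = if u = 0 then (S : ℝ) else 0 := by
  have hS0 : (S : ℝ) ≠ 0 := by positivity
  have hperiodic : cos (2 * π * S * u / S) = cos (2 * π * (0 : ℕ) * u / S) := by
    rw [show 2 * π * S * u / S = u * (2 * π) by field_simp, cos_nat_mul_two_pi]
    simp
  rw [sum_range_succ_quadEps_mul hS _ hperiodic]
  split_ifs with hu0
  · simp [hu0]
  · exact sum_range_cos_two_pi_mul_div_eq_zero (Nat.not_dvd_of_pos_of_lt (by omega) hu)

theorem sum_quadW_eq (S : ℕ) :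
    ∑ s ∈ range (S + 1), quadW S s = 4 * π / (S : ℝ) ^ 2 *
      ∑ u ∈ range (S / 2 + 1), 2 * quadEps S u / (1 - 4 * (u : ℝ) ^ 2) *
        ∑ s ∈ range (S + 1), quadEps S s * cos (2 * π * s * u / S) := by
  simp only [quadW, mul_sum]
  rw [sum_comm]
  refine sum_congr rfl fun u _ => sum_congr rfl fun s _ => ?_
  ring

/-- `Σ_{s=0}^{S} Σ_{t=0}^{S-1} w_s = 4π`, i.e. `S · Σ_{s=0}^{S} w_s = 4π`. -/
theorem quadW_sum (S : ℕ) (hS : 1 ≤ S) :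
    (S : ℝ) * ∑ s ∈ Finset.range (S + 1), quadW S s = 4 * Real.pi := by
  have hfreq : ∀ u ∈ range (S / 2 + 1), u < S := fun u hu => by
    have := mem_range.mp hu
    omega
  rw [sum_quadW_eq, sum_congr rfl fun u hu => by rw [sum_quadEps_mul_cos hS (hfreq u hu)]]
  simp only [mul_ite, mul_zero, sum_ite_eq', mem_range, Nat.zero_lt_succ, if_true]
  have hS0 : (S : ℝ) ≠ 0 := by positivity
  simp only [quadEps, true_or, if_true, Nat.cast_zero]
  field_simp
  ring

end
end

section
/- For every η ∈ (0,1], every real V ≥ 1, and every integer Q with Q ≥ max{ 5.3 V^{1/3}, log₂(1/η) }, one has (1/(√(8Q) π)) · ( (e/Q) · ((√3 π/16)^{2/3}) · (V^{1/3} + 1) )^{Q} ≤ η. -/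
noncomputable section

open MeasureTheory Finset Real

/-! The base of the power is at most `1/2`: cubing reduces `e (√3π/16)^{2/3} ≤ 5.3/4` to
`3π²e³/256 ≤ 1.325³`, which holds with a margin of about `0.003`, and `V^{1/3} + 1 ≤ 2V^{1/3}`.
The prefactor is at most `1`, and `(1/2)^Q ≤ η` is `Q ≥ log₂(1/η)`. -/

lemma exp_one_mul_sqrt_three_mul_pi_div_sixteen_rpow_le :
    exp 1 * (√3 * π / 16) ^ ((2 : ℝ) / 3) ≤ 53 / 40 := by
  set a : ℝ := √3 * π / 16
  have ha : 0 ≤ a := by positivity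
  have hcube : (exp 1 * a ^ ((2 : ℝ) / 3)) ^ 3 = exp 1 ^ 3 * (3 * π ^ 2 / 256) := by
    have hsq : a ^ 2 = 3 * π ^ 2 / 256 := by
      simp only [a, div_pow, mul_pow, sq_sqrt (by norm_num : (0 : ℝ) ≤ 3)]
      norm_num
    rw [mul_pow, ← rpow_natCast (a ^ _), ← rpow_mul ha, ← hsq, ← rpow_natCast a 2]
    norm_num
  have he : exp 1 ^ 3 < 2.7182818286 ^ 3 :=
    pow_lt_pow_left₀ exp_one_lt_d9 (exp_pos 1).le (by norm_num)
  have hπ : π ^ 2 < 3.141593 ^ 2 := pow_lt_pow_left₀ pi_lt_d6 pi_pos.le (by norm_num)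
  refine le_of_pow_le_pow_left₀ (n := 3) (by norm_num) (by norm_num) ?_
  rw [hcube]
  nlinarith [pow_pos (exp_pos 1) 3, sq_nonneg π]

lemma exp_one_div_mul_rpow_mul_add_one_le_half {x Q : ℝ} (hx : 1 ≤ x) (hQ : 5.3 * x ≤ Q) :
    exp 1 / Q * (√3 * π / 16) ^ ((2 : ℝ) / 3) * (x + 1) ≤ 1 / 2 := by
  have hc := exp_one_mul_sqrt_three_mul_pi_div_sixteen_rpow_le
  have hQ0 : 0 < Q := by linarith
  rw [div_mul_eq_mul_div, div_mul_eq_mul_div, div_le_iff₀ hQ0]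
  nlinarith

lemma one_div_sqrt_mul_pi_le_one {t : ℝ} (ht : 1 ≤ t) : 1 / (√t * π) ≤ 1 := by
  have hs : 1 ≤ √t := one_le_sqrt.mpr ht
  rw [div_le_one (by positivity)]
  nlinarith [pi_gt_three]

lemma half_pow_le_of_logb_inv_le {η : ℝ} (hη : 0 < η) {n : ℕ} (hn : logb 2 (1 / η) ≤ n) :
    (1 / 2 : ℝ) ^ n ≤ η := by
  rw [logb_le_iff_le_rpow one_lt_two (by positivity), rpow_natCast] at hn
  rw [div_pow, one_pow, div_le_iff₀ (by positivity)]
  rwa [div_le_iff₀ hη, mul_comm] at hn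

theorem stirling_residual_bound_general (η : ℝ) (hη0 : 0 < η)
    (V : ℝ) (hV : 1 ≤ V) (Q : ℕ)
    (hQ : max (5.3 * V ^ ((1:ℝ)/3)) (Real.logb 2 (1/η)) ≤ (Q : ℝ)) :
    1 / (Real.sqrt (8 * Q) * Real.pi) *
      (Real.exp 1 / Q * (Real.sqrt 3 * Real.pi / 16) ^ ((2:ℝ)/3) *
        (V ^ ((1:ℝ)/3) + 1)) ^ Q ≤ η := by
  have hx : 1 ≤ V ^ ((1 : ℝ) / 3) := one_le_rpow hV (by norm_num)
  have hQV := (le_max_left _ _).trans hQ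
  have hQη := (le_max_right _ _).trans hQ
  have hbase := exp_one_div_mul_rpow_mul_add_one_le_half hx hQV
  calc _ ≤ 1 * (1 / 2 : ℝ) ^ Q :=
        mul_le_mul (one_div_sqrt_mul_pi_le_one (by linarith))
          (pow_le_pow_left₀ (by positivity) hbase Q) (by positivity) zero_le_one
    _ ≤ η := (one_mul _).trans_le (half_pow_le_of_logb_inv_le hη0 hQη)

/-- For `η ∈ (0,1]`, `V ≥ 1` and `Q ≥ max{5.3 V^{1/3}, log₂(1/η)}`,
`(1/(√(8Q)π)) ((e/Q)(√3π/16)^{2/3}(V^{1/3}+1))^Q ≤ η`. -/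
theorem stirling_residual_bound (η : ℝ) (hη0 : 0 < η) (hη1 : η ≤ 1)
    (V : ℝ) (hV : 1 ≤ V) (Q : ℕ)
    (hQ : max (5.3 * V ^ ((1:ℝ)/3)) (Real.logb 2 (1/η)) ≤ (Q : ℝ)) :
    1 / (Real.sqrt (8 * Q) * Real.pi) *
      (Real.exp 1 / Q * (Real.sqrt 3 * Real.pi / 16) ^ ((2:ℝ)/3) *
        (V ^ ((1:ℝ)/3) + 1)) ^ Q ≤ η :=
  stirling_residual_bound_general η hη0 V hV Q hQ

end
end
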